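/- arXiv:0807.1949 — 5 statements merged into one kernel-verified Lean document; each statement's English description precedes it below -/
import Mathlib

section
/- Let n1, n2, m be natural numbers and let A be the real symmetric (n1+n2+m)×(n1+n2+m) matrix given in block form by A = [[A1, 0, B1], [0, A2, B2], [B1ᵀ, B2ᵀ, C]], where A1 is n1×n1, A2 is n2×n2, B1 is n1×m, B2 is n2×m and C is m×m. If A is symmetric positive definite, then there exist real symmetric m×m matrices C1 and C2 with C1 + C2 = C such that both block matrices [[A1, B1], [B1ᵀ, C1]] and [[A2, B2], [B2ᵀ, C2]] are symmetric positive definite. -/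
/-!
Eliminating the inner blocks, positive definiteness of the whole matrix is equivalent to positive
definiteness of the Schur complement `S = C - B₁ᵀ A₁⁻¹ B₁ - B₂ᵀ A₂⁻¹ B₂`, because the inverse of the
block-diagonal inner part is block diagonal. Giving each subgraph `Cᵢ = Bᵢᵀ Aᵢ⁻¹ Bᵢ + S / 2`
makes the Schur complement of each two-block matrix equal to `S / 2`, which is positive definite.
-/

open Matrix

namespace Matrix

section Ring

variable {R k l : Type*} [Ring R] [PartialOrder R] [StarRing R]
  {A : Matrix k k R} {B : Matrix k l R} {C : Matrix l k R} {D : Matrix l l R}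

theorem PosDef.of_fromBlocks₁₁ (h : (fromBlocks A B C D).PosDef) : A.PosDef :=
  h.submatrix Sum.inl_injective

theorem PosDef.of_fromBlocks₂₂ (h : (fromBlocks A B C D).PosDef) : D.PosDef :=
  h.submatrix Sum.inr_injective

end Ring

open scoped ComplexOrder

variable {𝕜 k l n₁ n₂ : Type*} [RCLike 𝕜] [Fintype k] [Fintype l] [Fintype n₁] [Fintype n₂]
  [DecidableEq k] [DecidableEq n₁] [DecidableEq n₂]

theorem PosDef.fromBlocks₁₁_posDef_iff {A : Matrix k k 𝕜} (hA : A.PosDef)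
    (B : Matrix k l 𝕜) (D : Matrix l l 𝕜) :
    (fromBlocks A B Bᴴ D).PosDef ↔ (D - Bᴴ * A⁻¹ * B).PosDef := by
  classical
  let := hA.isUnit.invertible
  have hdet : (fromBlocks A B Bᴴ D).det = A.det * (D - Bᴴ * A⁻¹ * B).det := by
    rw [det_fromBlocks₁₁, invOf_eq_nonsing_inv]
  constructor
  · intro h
    refine ((hA.fromBlocks₁₁ B D).mp h.posSemidef).posDef_iff_det_ne_zero.mpr ?_
    exact right_ne_zero_of_mul (hdet ▸ h.det_pos.ne')
  · intro hS
    refine ((hA.fromBlocks₁₁ B D).mpr hS.posSemidef).posDef_iff_det_ne_zero.mpr ?_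
    rw [hdet]
    exact mul_ne_zero hA.det_pos.ne' hS.det_pos.ne'

omit [Fintype l] in
theorem fromRows_conjTranspose_mul_inv_fromBlocks_diagonal_mul_fromRows
    {A₁ : Matrix n₁ n₁ 𝕜} {A₂ : Matrix n₂ n₂ 𝕜} (hA : IsUnit A₁ ↔ IsUnit A₂)
    (B₁ : Matrix n₁ l 𝕜) (B₂ : Matrix n₂ l 𝕜) :
    (fromRows B₁ B₂)ᴴ * (fromBlocks A₁ 0 0 A₂)⁻¹ * fromRows B₁ B₂
      = B₁ᴴ * A₁⁻¹ * B₁ + B₂ᴴ * A₂⁻¹ * B₂ := by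
  rw [inv_fromBlocks_zero₁₂_of_isUnit_iff _ _ _ hA,
    conjTranspose_fromRows_eq_fromCols_conjTranspose, fromCols_mul_fromBlocks,
    fromCols_mul_fromRows]
  simp

theorem PosDef.exists_add_eq_posDef_fromBlocks {A₁ : Matrix n₁ n₁ 𝕜} {A₂ : Matrix n₂ n₂ 𝕜}
    {B₁ : Matrix n₁ l 𝕜} {B₂ : Matrix n₂ l 𝕜} {C : Matrix l l 𝕜}
    (h : (fromBlocks (fromBlocks A₁ 0 0 A₂) (fromRows B₁ B₂) (fromRows B₁ B₂)ᴴ C).PosDef) :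
    ∃ C₁ C₂ : Matrix l l 𝕜, C₁ + C₂ = C ∧
      (fromBlocks A₁ B₁ B₁ᴴ C₁).PosDef ∧ (fromBlocks A₂ B₂ B₂ᴴ C₂).PosDef := by
  have hA : (fromBlocks A₁ 0 0 A₂).PosDef := h.of_fromBlocks₁₁
  have hA₁ : A₁.PosDef := hA.of_fromBlocks₁₁
  have hA₂ : A₂.PosDef := hA.of_fromBlocks₂₂
  have hS : (C - (B₁ᴴ * A₁⁻¹ * B₁ + B₂ᴴ * A₂⁻¹ * B₂)).PosDef := by
    rw [← fromRows_conjTranspose_mul_inv_fromBlocks_diagonal_mul_fromRows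
      (iff_of_true hA₁.isUnit hA₂.isUnit)]
    exact (hA.fromBlocks₁₁_posDef_iff _ C).mp h
  set S := C - (B₁ᴴ * A₁⁻¹ * B₁ + B₂ᴴ * A₂⁻¹ * B₂)
  have hS₂ : ((2⁻¹ : ℝ) • S).PosDef := hS.smul (by norm_num)
  refine ⟨B₁ᴴ * A₁⁻¹ * B₁ + (2⁻¹ : ℝ) • S, B₂ᴴ * A₂⁻¹ * B₂ + (2⁻¹ : ℝ) • S, ?_, ?_, ?_⟩
  · rw [add_add_add_comm, ← add_smul]
    norm_num [S]
  · rwa [hA₁.fromBlocks₁₁_posDef_iff, add_sub_cancel_left]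
  · rwa [hA₂.fromBlocks₁₁_posDef_iff, add_sub_cancel_left]

end Matrix

theorem conformal_splitting_two_subgraphs (n1 n2 m : ℕ)
    (A1 : Matrix (Fin n1) (Fin n1) ℝ) (A2 : Matrix (Fin n2) (Fin n2) ℝ)
    (B1 : Matrix (Fin n1) (Fin m) ℝ) (B2 : Matrix (Fin n2) (Fin m) ℝ)
    (C : Matrix (Fin m) (Fin m) ℝ)
    (hA : (fromBlocks (fromBlocks A1 0 0 A2) (fromRows B1 B2)
        (fromCols B1ᵀ B2ᵀ) C).PosDef) :
    ∃ C1 C2 : Matrix (Fin m) (Fin m) ℝ,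
      C1ᵀ = C1 ∧ C2ᵀ = C2 ∧ C1 + C2 = C ∧
      (fromBlocks A1 B1 B1ᵀ C1).PosDef ∧
      (fromBlocks A2 B2 B2ᵀ C2).PosDef := by
  simp only [← conjTranspose_eq_transpose_of_trivial] at hA ⊢
  rw [← conjTranspose_fromRows_eq_fromCols_conjTranspose] at hA
  obtain ⟨C1, C2, hC, h1, h2⟩ := hA.exists_add_eq_posDef_fromBlocks
  exact ⟨C1, C2, h1.of_fromBlocks₂₂.isHermitian, h2.of_fromBlocks₂₂.isHermitian, hC, h1, h2⟩
end

section
/- Let n1, n2, m be natural numbers and let A be the real symmetric (n1+n2+m)×(n1+n2+m) matrix given in block form by A = [[A1, 0, B1], [0, A2, B2], [B1ᵀ, B2ᵀ, C]], where A1 is n1×n1, A2 is n2×n2, B1 is n1×m, B2 is n2×m and C is m×m. If A is symmetric positive definite, then there exist real symmetric m×m matrices C1 and C2 with C1 + C2 = C such that both block matrices [[A1, B1], [B1ᵀ, C1]] and [[A2, B2], [B2ᵀ, C2]] are symmetric positive semidefinite. -/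
/-!
Let `D = diag(A₁, A₂)` be the upper-left block. Positive definiteness of the whole matrix makes
`A₁`, `A₂` invertible and its Schur complement `S = C - B₁ᵀA₁⁻¹B₁ - B₂ᵀA₂⁻¹B₂` positive
semidefinite. Put `C₁ = B₁ᵀA₁⁻¹B₁ + S` and `C₂ = B₂ᵀA₂⁻¹B₂`: the Schur complements of `A₁` and
`A₂` in the two halves are then `S` and `0`, so both halves are positive semidefinite.
-/

open Matrix

namespace Matrix.PosDef

variable {l m n R : Type*}

section Ring

variable [Ring R] [PartialOrder R] [StarRing R]

theorem of_fromBlocks₁₁_s1 {A : Matrix m m R} {B : Matrix m n R} {C : Matrix n m R}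
    {D : Matrix n n R} (h : (fromBlocks A B C D).PosDef) : A.PosDef :=
  h.submatrix Sum.inl_injective

theorem of_fromBlocks₂₂_s1 {A : Matrix m m R} {B : Matrix m n R} {C : Matrix n m R}
    {D : Matrix n n R} (h : (fromBlocks A B C D).PosDef) : D.PosDef :=
  h.submatrix Sum.inr_injective

end Ring

variable [Fintype l] [Fintype m] [Fintype n] [DecidableEq l] [DecidableEq m]
  [Field R] [PartialOrder R] [StarRing R] [StarOrderedRing R]

theorem posSemidef_fromBlocks_schur_add_iff {A : Matrix m m R} (hA : A.PosDef)
    (B : Matrix m n R) (S : Matrix n n R) :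
    (fromBlocks A B Bᴴ (Bᴴ * A⁻¹ * B + S)).PosSemidef ↔ S.PosSemidef := by
  let := hA.isUnit.invertible
  rw [hA.fromBlocks₁₁, add_sub_cancel_left]

theorem posSemidef_sub_schur_fromBlocks_fromBlocks {A₁ : Matrix l l R} {A₂ : Matrix m m R}
    {B₁ : Matrix l n R} {B₂ : Matrix m n R} {C : Matrix n n R}
    (h : (fromBlocks (fromBlocks A₁ 0 0 A₂) (fromRows B₁ B₂) (fromCols B₁ᴴ B₂ᴴ) C).PosDef) :
    (C - B₁ᴴ * A₁⁻¹ * B₁ - B₂ᴴ * A₂⁻¹ * B₂).PosSemidef := by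
  have hD := h.of_fromBlocks₁₁_s1
  have hA₁ := hD.of_fromBlocks₁₁_s1
  have hA₂ := hD.of_fromBlocks₂₂_s1
  let := hD.isUnit.invertible
  have hD_inv : (fromBlocks A₁ 0 0 A₂)⁻¹ = fromBlocks A₁⁻¹ 0 0 A₂⁻¹ := by
    rw [inv_fromBlocks_zero₂₁_of_isUnit_iff _ _ _ (iff_of_true hA₁.isUnit hA₂.isUnit)]
    simp
  have hschur := (hD.fromBlocks₁₁ (fromRows B₁ B₂) C).1 <| by
    rw [conjTranspose_fromRows_eq_fromCols_conjTranspose]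
    exact h.posSemidef
  rw [hD_inv, conjTranspose_fromRows_eq_fromCols_conjTranspose, fromCols_mul_fromBlocks,
    fromCols_mul_fromRows] at hschur
  simpa [sub_sub, Matrix.mul_assoc] using hschur

end Matrix.PosDef

theorem conformal_splitting_two_subgraphs_semidef (n1 n2 m : ℕ)
    (A1 : Matrix (Fin n1) (Fin n1) ℝ) (A2 : Matrix (Fin n2) (Fin n2) ℝ)
    (B1 : Matrix (Fin n1) (Fin m) ℝ) (B2 : Matrix (Fin n2) (Fin m) ℝ)
    (C : Matrix (Fin m) (Fin m) ℝ)
    (hA : (fromBlocks (fromBlocks A1 0 0 A2) (fromRows B1 B2)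
        (fromCols B1ᵀ B2ᵀ) C).PosDef) :
    ∃ C1 C2 : Matrix (Fin m) (Fin m) ℝ,
      C1ᵀ = C1 ∧ C2ᵀ = C2 ∧ C1 + C2 = C ∧
      (fromBlocks A1 B1 B1ᵀ C1).PosSemidef ∧
      (fromBlocks A2 B2 B2ᵀ C2).PosSemidef := by
  simp only [← conjTranspose_eq_transpose_of_trivial] at hA ⊢
  have hD := hA.of_fromBlocks₁₁_s1
  have hS := hA.posSemidef_sub_schur_fromBlocks_fromBlocks
  set S := C - B1ᴴ * A1⁻¹ * B1 - B2ᴴ * A2⁻¹ * B2 with hS_def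
  have h₁ := (hD.of_fromBlocks₁₁_s1.posSemidef_fromBlocks_schur_add_iff B1 S).2 hS
  have h₂ := (hD.of_fromBlocks₂₂_s1.posSemidef_fromBlocks_schur_add_iff B2 0).2 .zero
  refine ⟨_, _, (isHermitian_fromBlocks_iff.1 h₁.1).2.2.2,
    (isHermitian_fromBlocks_iff.1 h₂.1).2.2.2, ?_, h₁, h₂⟩
  rw [hS_def]
  abel
end

section
/- Let Z be a real symmetric positive definite r×r matrix, let M be the 2r×2r block-diagonal matrix M = [[Z, 0], [0, Z]], let S be a real symmetric positive definite 2r×2r matrix, let J be the 2r×2r swap matrix J = [[0, I], [I, 0]], and let P := (I + M·S)⁻¹ · J · (I − M·S) (the matrix I + M·S being invertible). Then there exist a constant c ≥ 0 and a real number ρ with 0 ≤ ρ < 1 such that for every natural number k ≥ 1, the ℓ²-operator norm of P^k satisfies ‖P^k‖₂ ≤ c · ρ^(k−1). -/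
/-!
Write `W = √M` and `T = W S W`, which is positive definite. Since `W` commutes with the swap `J`,
conjugating by `W` turns `P` into `(I + T)⁻¹ J (I - T)`, so `P = X Y` with `X = W (I + T)⁻¹` and
`Y = J (I - T) W⁻¹`, and `P^(k+1) = X (Y X)^k Y` where `Y X = J (I - T)(I + T)⁻¹`. The swap has
norm at most one, and the Cayley transform `(I - T)(I + T)⁻¹ = f(T)` with `f t = (1 - t)/(1 + t)`
has norm `max |f(t_i)| < 1` over the positive eigenvalues `t_i` of `T`. Hence `ρ = ‖Y X‖ < 1`.
-/

open Matrix
open scoped MatrixOrder Matrix.Norms.L2Operator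

theorem norm_mul_pow_le {R : Type*} [SeminormedRing R] (x a : R) (n : ℕ) :
    ‖x * a ^ n‖ ≤ ‖x‖ * ‖a‖ ^ n := by
  induction n with
  | zero => simp
  | succ n ih =>
    calc ‖x * a ^ (n + 1)‖ = ‖x * a ^ n * a‖ := by rw [pow_succ, mul_assoc]
      _ ≤ ‖x * a ^ n‖ * ‖a‖ := norm_mul_le _ _
      _ ≤ ‖x‖ * ‖a‖ ^ n * ‖a‖ := by gcongr
      _ = ‖x‖ * ‖a‖ ^ (n + 1) := by ring

theorem norm_mul_pow_succ_le {R : Type*} [SeminormedRing R] (x y : R) (n : ℕ) :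
    ‖(x * y) ^ (n + 1)‖ ≤ ‖x‖ * ‖y * x‖ ^ n * ‖y‖ := by
  rw [pow_succ, ← mul_assoc, mul_pow_mul]
  exact (norm_mul_le _ _).trans (by gcongr; exact norm_mul_pow_le x (y * x) n)

namespace Matrix

theorem commute_fromBlocks_zero_one_one_zero {m α : Type*} [Fintype m] [DecidableEq m]
    [Semiring α] (A : Matrix m m α) :
    Commute (fromBlocks A 0 0 A) (fromBlocks 0 1 1 0) := by
  simp [Commute, SemiconjBy, fromBlocks_multiply]

theorem l2_opNorm_fromBlocks_zero_one_one_zero_le (m 𝕜 : Type*) [Fintype m] [DecidableEq m]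
    [RCLike 𝕜] : ‖(fromBlocks 0 1 1 0 : Matrix (m ⊕ m) (m ⊕ m) 𝕜)‖ ≤ 1 := by
  have : (fromBlocks 0 1 1 0 : Matrix (m ⊕ m) (m ⊕ m) 𝕜) =
      Equiv.Perm.permMatrix 𝕜 (Equiv.sumComm m m) := by
    ext (i | i) (j | j) <;> simp [Equiv.Perm.permMatrix, one_apply, eq_comm]
  exact this ▸ permMatrix_l2_opNorm_le _

variable {n : Type*} [Fintype n] [DecidableEq n]

theorem PosDef.fromBlocks_zero {m : Type*} [Fintype m] [DecidableEq m] {A : Matrix m m ℝ}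
    {D : Matrix n n ℝ} (hA : A.PosDef) (hD : D.PosDef) : (fromBlocks A 0 0 D).PosDef := by
  have := hA.isUnit.invertible
  have hsemi : (fromBlocks A 0 0 D).PosSemidef := by
    simpa using (PosDef.fromBlocks₁₁ (0 : Matrix m n ℝ) D hA).2 (by simpa using hD.posSemidef)
  exact hsemi.posDef_iff_isUnit.2 (isUnit_fromBlocks_zero₂₁.2 ⟨hA.isUnit, hD.isUnit⟩)

theorem inv_one_add_mul_mul_one_sub_eq {α : Type*} [CommRing α] {W S J : Matrix n n α}
    (hW : IsUnit W) (hWJ : Commute W J) :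
    (1 + W * W * S)⁻¹ * J * (1 - W * W * S)
      = W * (1 + W * S * W)⁻¹ * (J * (1 - W * S * W) * W⁻¹) := by
  have hdet : IsUnit W.det := (isUnit_iff_isUnit_det W).1 hW
  have hplus : 1 + W * W * S = W * (1 + W * S * W) * W⁻¹ := by
    simp only [Matrix.mul_add, Matrix.add_mul, Matrix.mul_one, Matrix.mul_assoc,
      mul_nonsing_inv _ hdet]
  have hminus : 1 - W * W * S = W * (1 - W * S * W) * W⁻¹ := by
    simp only [Matrix.mul_sub, Matrix.sub_mul, Matrix.mul_one, Matrix.mul_assoc,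
      mul_nonsing_inv _ hdet]
  rw [hplus, hminus, Matrix.mul_inv_rev, Matrix.mul_inv_rev, nonsing_inv_nonsing_inv _ hdet]
  simp only [Matrix.mul_assoc]
  rw [← Matrix.mul_assoc J W, ← hWJ.eq, Matrix.mul_assoc W J, nonsing_inv_mul_cancel_left _ _ hdet]

theorem PosDef.cfc_cayley_eq {T : Matrix n n ℝ} (hT : T.PosDef) :
    cfc (fun t : ℝ ↦ (1 - t) / (1 + t)) T = (1 - T) * (1 + T)⁻¹ := by
  have hdet : IsUnit (1 + T).det := (PosDef.one.add hT).det_pos.ne'.isUnit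
  have hspec : ∀ t ∈ spectrum ℝ T, 1 + t ≠ 0 := fun t ht ↦
    (add_pos one_pos (hT.isStrictlyPositive.spectrum_pos ht)).ne'
  have key : cfc (fun t : ℝ ↦ (1 - t) / (1 + t)) T * (1 + T) = 1 - T := by
    calc cfc (fun t : ℝ ↦ (1 - t) / (1 + t)) T * (1 + T)
        = cfc (fun t : ℝ ↦ (1 - t) / (1 + t)) T * cfc (fun t : ℝ ↦ 1 + t) T := by
          rw [cfc_add T (fun _ ↦ 1) (fun t ↦ t), cfc_const_one ℝ T, cfc_id' ℝ T]
      _ = cfc (fun t : ℝ ↦ (1 - t) / (1 + t) * (1 + t)) T := (cfc_mul _ _ T).symm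
      _ = cfc (fun t : ℝ ↦ 1 - t) T := cfc_congr fun t ht ↦ div_mul_cancel₀ _ (hspec t ht)
      _ = 1 - T := by rw [cfc_sub (fun _ ↦ 1) (fun t ↦ t) T, cfc_const_one ℝ T, cfc_id' ℝ T]
  rw [← key, mul_nonsing_inv_cancel_right _ _ hdet]

theorem PosDef.l2_opNorm_cayley_lt_one {T : Matrix n n ℝ} (hT : T.PosDef) :
    ‖(1 - T) * (1 + T)⁻¹‖ < 1 := by
  rw [← hT.cfc_cayley_eq]
  refine norm_cfc_lt one_pos fun t ht ↦ ?_
  have ht : 0 < t := hT.isStrictlyPositive.spectrum_pos ht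
  rw [Real.norm_eq_abs, abs_div, abs_of_pos (by linarith : 0 < 1 + t), div_lt_one (by linarith),
    abs_lt]
  constructor <;> linarith

end Matrix

theorem iteration_matrix_power_norm_bound (r : ℕ)
    (Z : Matrix (Fin r) (Fin r) ℝ) (hZ : Z.PosDef)
    (S : Matrix (Fin r ⊕ Fin r) (Fin r ⊕ Fin r) ℝ) (hS : S.PosDef)
    (M J P : Matrix (Fin r ⊕ Fin r) (Fin r ⊕ Fin r) ℝ)
    (hM : M = fromBlocks Z 0 0 Z)
    (hJ : J = fromBlocks 0 1 1 0)
    (hP : P = (1 + M * S)⁻¹ * J * (1 - M * S)) :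
    ∃ c ρ : ℝ, 0 ≤ c ∧ 0 ≤ ρ ∧ ρ < 1 ∧
      ∀ k : ℕ, 1 ≤ k →
        ‖toEuclideanCLM (𝕜 := ℝ) (P ^ k)‖ ≤ c * ρ ^ (k - 1) := by
  have hMpos : M.PosDef := hM ▸ hZ.fromBlocks_zero hZ
  set W := CFC.sqrt M
  have hW : IsUnit W := hMpos.isStrictlyPositive.sqrt.isUnit
  have hWW : W * W = M := CFC.sqrt_mul_sqrt_self M hMpos.posSemidef.nonneg
  have hWJ : Commute W J := (hM ▸ hJ ▸ commute_fromBlocks_zero_one_one_zero Z).cfcₙ_nnreal _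
  have hT : (W * S * W).PosDef := by
    have h := hS.conjTranspose_mul_mul_same (mulVec_injective_iff_isUnit.2 hW)
    rwa [← star_eq_conjTranspose, (CFC.sqrt_nonneg M).isSelfAdjoint.star_eq] at h
  set X := W * (1 + W * S * W)⁻¹
  set Y := J * (1 - W * S * W) * W⁻¹
  have hPXY : P = X * Y := by rw [hP, ← hWW, inv_one_add_mul_mul_one_sub_eq hW hWJ]
  have hYX : Y * X = J * ((1 - W * S * W) * (1 + W * S * W)⁻¹) := by
    simp only [X, Y, Matrix.mul_assoc,
      nonsing_inv_mul_cancel_left _ _ ((isUnit_iff_isUnit_det W).1 hW)]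
  have hρ : ‖Y * X‖ < 1 := by
    rw [hYX]
    refine (norm_mul_le _ _).trans_lt (mul_lt_one_of_nonneg_of_lt_one_right ?_ (norm_nonneg _)
      hT.l2_opNorm_cayley_lt_one)
    exact hJ ▸ l2_opNorm_fromBlocks_zero_one_one_zero_le (Fin r) ℝ
  refine ⟨‖X‖ * ‖Y‖, ‖Y * X‖, by positivity, norm_nonneg _, hρ, fun k hk ↦ ?_⟩
  obtain ⟨k, rfl⟩ := Nat.exists_eq_add_of_le' hk
  rw [l2_opNorm_toEuclideanCLM, hPXY, Nat.add_sub_cancel]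
  exact (norm_mul_pow_succ_le X Y k).trans_eq (by ring)
end

section
/- Let Z be a real symmetric positive definite r×r matrix, let M be the 2r×2r block-diagonal matrix M = [[Z, 0], [0, Z]], let S be a real symmetric positive definite 2r×2r matrix, let J be the 2r×2r swap matrix J = [[0, I], [I, 0]], and let P := (I + M·S)⁻¹ · J · (I − M·S) (the matrix I + M·S being invertible). Then the powers P^k converge to the zero matrix as k → ∞. -/
/-!
Put `A = 1 + M S` and measure vectors in the energy `G = Aᴴ M⁻¹ A`. Since `J` preserves `M⁻¹`,
one step of the iteration `P = A⁻¹ J (1 - M S)` turns this energy into `(1 - M S)ᴴ M⁻¹ (1 - M S)`,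
which is `G - 4 S`. So `G - Pᴴ G P = 4 S` is positive definite: in the norm of `G` the matrix `P`
is a strict contraction, and a strict contraction of a finite-dimensional space has powers
tending to zero. Concretely, writing `G = Bᴴ B`, the matrix `Q = B P B⁻¹` satisfies
`1 - Qᴴ Q > 0`, so its `ℓ²` operator norm is `< 1` by compactness of the unit sphere.
-/

open Matrix Filter Topology
open scoped ComplexOrder

theorem ContinuousLinearMap.opNorm_lt_one_of_norm_apply_lt {𝕜 E F : Type*} [RCLike 𝕜]
    [NormedAddCommGroup E] [NormedSpace 𝕜 E] [ProperSpace E]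
    [NormedAddCommGroup F] [NormedSpace 𝕜 F] (f : E →L[𝕜] F)
    (hf : ∀ x ≠ 0, ‖f x‖ < ‖x‖) : ‖f‖ < 1 := by
  rcases subsingleton_or_nontrivial E with hE | _
  · simp [Subsingleton.elim f 0]
  obtain ⟨x₀, hx₀, hmax⟩ := (isCompact_sphere (0 : E) 1).exists_isMaxOn
    ⟨_, mem_sphere_zero_iff_norm.2 (norm_smul_inv_norm (𝕜 := 𝕜) (exists_ne (0 : E)).choose_spec)⟩
    (map_continuous f).norm.continuousOn
  rw [mem_sphere_zero_iff_norm] at hx₀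
  calc ‖f‖ ≤ ‖f x₀‖ :=
        f.opNorm_le_of_unit_norm (norm_nonneg _) fun x hx => hmax (mem_sphere_zero_iff_norm.2 hx)
    _ < 1 := hx₀ ▸ hf x₀ (norm_ne_zero_iff.1 (hx₀ ▸ one_ne_zero))

namespace Matrix

variable {𝕜 n : Type*} [RCLike 𝕜] [Fintype n] [DecidableEq n]

open scoped Matrix.Norms.L2Operator in
theorem l2_opNorm_lt_one_of_posDef_one_sub {Q : Matrix n n 𝕜} (hQ : (1 - Qᴴ * Q).PosDef) :
    ‖Q‖ < 1 := by
  rw [← l2_opNorm_toEuclideanCLM]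
  refine ContinuousLinearMap.opNorm_lt_one_of_norm_apply_lt _ fun x hx => ?_
  have hpos := hQ.re_dotProduct_pos (x := x.ofLp) (by simpa using hx)
  have hnorm (y : EuclideanSpace 𝕜 n) : ‖y‖ ^ 2 = RCLike.re (star y.ofLp ⬝ᵥ y.ofLp) := by
    rw [@norm_sq_eq_re_inner 𝕜, EuclideanSpace.inner_eq_star_dotProduct, dotProduct_comm]
  have hdefect : ‖x‖ ^ 2 - ‖toEuclideanCLM (n := n) (𝕜 := 𝕜) Q x‖ ^ 2
      = RCLike.re (star x.ofLp ⬝ᵥ ((1 - Qᴴ * Q) *ᵥ x.ofLp)) := by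
    rw [hnorm, hnorm, ofLp_toEuclideanCLM, sub_mulVec, one_mulVec, dotProduct_sub, map_sub,
      star_mulVec, ← dotProduct_mulVec, mulVec_mulVec]
  exact lt_of_pow_lt_pow_left₀ 2 (norm_nonneg x) (by linarith)

open scoped MatrixOrder in
theorem PosDef.exists_units_conjTranspose_mul_self {G : Matrix n n 𝕜} (hG : G.PosDef) :
    ∃ B : (Matrix n n 𝕜)ˣ, (B : Matrix n n 𝕜)ᴴ * B = G := by
  refine ⟨hG.isStrictlyPositive.isUnit_cfcSqrt.unit, ?_⟩
  rw [IsUnit.unit_spec, (CFC.sqrt_nonneg G).posSemidef.isHermitian.eq,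
    CFC.sqrt_mul_sqrt_self G hG.posSemidef.nonneg]

open scoped Matrix.Norms.L2Operator in
theorem tendsto_pow_atTop_nhds_zero_of_posDef_sub_conjTranspose_mul_mul {G P : Matrix n n 𝕜}
    (hG : G.PosDef) (hGP : (G - Pᴴ * G * P).PosDef) :
    Tendsto (fun k : ℕ => P ^ k) atTop (𝓝 0) := by
  obtain ⟨B, rfl⟩ := hG.exists_units_conjTranspose_mul_self
  set Q := B.val * P * B.inv
  have hpow (k : ℕ) : P ^ k = B.inv * Q ^ k * B.val := by
    have hP : P = B.inv * Q * B.val := by simp [Q, ← mul_assoc]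
    rw [hP]
    exact Units.conj_pow' B Q k
  have hQ : (1 - Qᴴ * Q).PosDef := by
    have hconj : 1 - Qᴴ * Q
        = B.invᴴ * (B.valᴴ * B.val - Pᴴ * (B.valᴴ * B.val) * P) * B.inv := by
      calc 1 - Qᴴ * Q = (B.val * B.inv)ᴴ * (B.val * B.inv) - Qᴴ * Q := by
            rw [B.val_inv, conjTranspose_one, one_mul]
        _ = _ := by simp only [Q, conjTranspose_mul]; noncomm_ring
    rw [hconj]
    exact hGP.conjTranspose_mul_mul_same (mulVec_injective_of_isUnit B⁻¹.isUnit)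
  -- The `ℓ²` operator norm induces the usual topology on matrices, so this limit is the goal's.
  have hQpow := tendsto_pow_atTop_nhds_zero_of_norm_lt_one (l2_opNorm_lt_one_of_posDef_one_sub hQ)
  simpa [hpow] using (hQpow.const_mul B.inv).mul_const B.val

theorem conjTranspose_one_add_mul_mul_inv_mul_sub {α : Type*} [CommRing α] [StarRing α]
    {M S : Matrix n n α} (hM : M.IsHermitian) (hS : S.IsHermitian) (hMu : IsUnit M) :
    (1 + M * S)ᴴ * M⁻¹ * (1 + M * S) - (1 - M * S)ᴴ * M⁻¹ * (1 - M * S) = (4 : α) • S := by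
  have hdet := (isUnit_iff_isUnit_det M).mp hMu
  simp only [conjTranspose_add, conjTranspose_sub, conjTranspose_mul, conjTranspose_one, hM.eq,
    hS.eq, add_mul, mul_add, sub_mul, mul_sub, one_mul, mul_one, mul_assoc,
    nonsing_inv_mul_cancel_left _ _ hdet, mul_nonsing_inv _ hdet]
  module

theorem PosDef.isUnit_one_add_mul {M S : Matrix n n 𝕜} (hM : M.PosDef) (hS : S.PosSemidef) :
    IsUnit (1 + M * S) := by
  have hfactor : 1 + M * S = M * (M⁻¹ + S) := by
    rw [mul_add, mul_nonsing_inv _ ((isUnit_iff_isUnit_det M).mp hM.isUnit)]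
  rw [hfactor]
  exact hM.isUnit.mul (hM.inv.add_posSemidef hS).isUnit

theorem tendsto_pow_inv_one_add_mul_mul_mul_one_sub_mul {M S J : Matrix n n 𝕜} (hM : M.PosDef)
    (hS : S.PosDef) (hJ : Jᴴ * M⁻¹ * J = M⁻¹) :
    Tendsto (fun k : ℕ => ((1 + M * S)⁻¹ * J * (1 - M * S)) ^ k) atTop (𝓝 0) := by
  have hA := hM.isUnit_one_add_mul hS.posSemidef
  have hAdet := (isUnit_iff_isUnit_det _).mp hA
  refine tendsto_pow_atTop_nhds_zero_of_posDef_sub_conjTranspose_mul_mul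
    (hM.inv.conjTranspose_mul_mul_same (mulVec_injective_of_isUnit hA)) ?_
  set A := 1 + M * S
  set X := 1 - M * S
  have hAA : (A⁻¹)ᴴ * Aᴴ = 1 := by
    rw [← conjTranspose_mul, mul_nonsing_inv _ hAdet, conjTranspose_one]
  have hstep : (A⁻¹ * J * X)ᴴ * (Aᴴ * M⁻¹ * A) * (A⁻¹ * J * X) = Xᴴ * M⁻¹ * X := by
    calc (A⁻¹ * J * X)ᴴ * (Aᴴ * M⁻¹ * A) * (A⁻¹ * J * X)
        = Xᴴ * Jᴴ * ((A⁻¹)ᴴ * Aᴴ) * M⁻¹ * (A * A⁻¹) * J * X := by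
          simp only [conjTranspose_mul]; noncomm_ring
      _ = Xᴴ * (Jᴴ * M⁻¹ * J) * X := by
          rw [hAA, mul_nonsing_inv _ hAdet]; noncomm_ring
      _ = Xᴴ * M⁻¹ * X := by rw [hJ]
  rw [hstep, conjTranspose_one_add_mul_mul_inv_mul_sub hM.isHermitian hS.isHermitian hM.isUnit]
  exact hS.smul (by norm_num)

theorem PosDef.fromBlocks_zero_zero {m : Type*} [Fintype m] [DecidableEq m]
    {A : Matrix m m 𝕜} {D : Matrix n n 𝕜} (hA : A.PosDef) (hD : D.PosDef) :
    (fromBlocks A 0 0 D).PosDef := by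
  have := hA.isUnit.invertible
  have hpsd : (fromBlocks A 0 0ᴴ D).PosSemidef :=
    (PosDef.fromBlocks₁₁ 0 D hA).2 (by simpa using hD.posSemidef)
  rw [conjTranspose_zero] at hpsd
  exact hpsd.posDef_iff_isUnit.2 (isUnit_fromBlocks_zero₂₁.2 ⟨hA.isUnit, hD.isUnit⟩)

end Matrix

theorem vtm_convergence_coupled (r : ℕ)
    (Z : Matrix (Fin r) (Fin r) ℝ) (hZ : Z.PosDef)
    (S : Matrix (Fin r ⊕ Fin r) (Fin r ⊕ Fin r) ℝ) (hS : S.PosDef)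
    (M J P : Matrix (Fin r ⊕ Fin r) (Fin r ⊕ Fin r) ℝ)
    (hM : M = fromBlocks Z 0 0 Z)
    (hJ : J = fromBlocks 0 1 1 0)
    (hP : P = (1 + M * S)⁻¹ * J * (1 - M * S)) :
    Filter.Tendsto (fun k : ℕ => P ^ k) Filter.atTop (nhds 0) := by
  subst hM hJ hP
  refine tendsto_pow_inv_one_add_mul_mul_mul_one_sub_mul (hZ.fromBlocks_zero_zero hZ) hS ?_
  rw [inv_fromBlocks_zero₂₁_of_isUnit_iff _ _ _ Iff.rfl]
  simp [fromBlocks_transpose, fromBlocks_multiply]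
end

section
/- Let Z be a real symmetric positive definite r×r matrix, let M be the 2r×2r block-diagonal matrix M = [[Z, 0], [0, Z]], let S be a real symmetric positive definite 2r×2r matrix, let J be the 2r×2r swap matrix J = [[0, I], [I, 0]], let P := (I + M·S)⁻¹ · J · (I − M·S), and let γ ∈ ℝ^(2r). Then for every initial vector û⁰ ∈ ℝ^(2r), the sequence defined recursively by û^k := P·û^(k−1) + γ converges as k → ∞, and its limit û∞ is the unique vector satisfying û∞ = P·û∞ + γ; in particular, the limit does not depend on the initial vector û⁰. -/
/-!
Put `B = 1 + M S`. The energy `W = Bᵀ M⁻¹ B` is positive definite, and since conjugation by `J`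
fixes `M⁻¹`, one computes `Pᵀ W P = (1 - M S)ᵀ M⁻¹ (1 - M S) = W - 4 S`. Comparing `S` with `W`
on the unit sphere gives `vᵀ S v ≥ δ vᵀ W v`, so the `W`-energy of `P v` is at most `1 - 4δ`
times that of `v`, and `P ^ k → 0`. Hence `1 - P` is invertible and, for the fixed point `L`,
`û^k - L = P ^ k (û⁰ - L) → 0`.
-/

open Matrix Filter Topology

section Homogeneous

variable {E : Type*} [NormedAddCommGroup E] [NormedSpace ℝ E] [FiniteDimensional ℝ E]

theorem exists_pos_mul_le_of_sq_homogeneous {f g : E → ℝ} (hf : Continuous f)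
    (hg : Continuous g) (hf_smul : ∀ (c : ℝ) v, f (c • v) = c ^ 2 * f v)
    (hg_smul : ∀ (c : ℝ) v, g (c • v) = c ^ 2 * g v) (hf_pos : ∀ v ≠ 0, 0 < f v) :
    ∃ δ > 0, ∀ v, δ * g v ≤ f v := by
  have hf_ne : ∀ v ∈ Metric.sphere (0 : E) 1, f v ≠ 0 := fun v hv =>
    (hf_pos v (ne_zero_of_mem_unit_sphere ⟨v, hv⟩)).ne'
  obtain ⟨K, hK⟩ := (isCompact_sphere (0 : E) 1).bddAbove_image
    ((hg.continuousOn.div hf.continuousOn hf_ne))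
  refine ⟨(max K 1)⁻¹, by positivity, fun v => ?_⟩
  rcases eq_or_ne v 0 with rfl | hv
  · have hf0 : f 0 = 0 := by simpa using hf_smul 0 0
    have hg0 : g 0 = 0 := by simpa using hg_smul 0 0
    simp [hf0, hg0]
  set u := ‖v‖⁻¹ • v
  have hu : u ∈ Metric.sphere (0 : E) 1 := by simp [u, norm_smul, hv]
  have hvu : v = ‖v‖ • u := by simp [u, smul_smul, hv]
  have hfu : 0 < f u := hf_pos u (ne_zero_of_mem_unit_sphere ⟨u, hu⟩)
  have hgu : g u ≤ max K 1 * f u := by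
    have := hK ⟨u, hu, rfl⟩
    rw [Pi.div_apply, div_le_iff₀ hfu] at this
    nlinarith [le_max_left K 1]
  rw [hvu, hf_smul, hg_smul, inv_mul_le_iff₀ (by positivity)]
  nlinarith [sq_nonneg ‖v‖]

end Homogeneous

section Quadratic

variable {n : Type*} [Fintype n]

theorem continuous_dotProduct_mulVec_self (A : Matrix n n ℝ) :
    Continuous fun v : n → ℝ => v ⬝ᵥ A *ᵥ v :=
  continuous_id.dotProduct (continuous_const.matrix_mulVec continuous_id)

theorem smul_dotProduct_mulVec_smul (A : Matrix n n ℝ) (c : ℝ) (v : n → ℝ) :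
    (c • v) ⬝ᵥ A *ᵥ (c • v) = c ^ 2 * (v ⬝ᵥ A *ᵥ v) := by
  rw [mulVec_smul, dotProduct_smul, smul_dotProduct, smul_eq_mul, smul_eq_mul]
  ring

theorem mulVec_dotProduct_mulVec_mulVec (P W : Matrix n n ℝ) (v : n → ℝ) :
    (P *ᵥ v) ⬝ᵥ W *ᵥ (P *ᵥ v) = v ⬝ᵥ (Pᵀ * W * P) *ᵥ v := by
  rw [← mulVec_mulVec, ← mulVec_mulVec, dotProduct_mulVec v Pᵀ, vecMul_transpose]

namespace Matrix.PosDef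

variable {A : Matrix n n ℝ}

theorem exists_pos_mul_dotProduct_mulVec_le (hA : A.PosDef) (B : Matrix n n ℝ) :
    ∃ δ > 0, ∀ v, δ * (v ⬝ᵥ B *ᵥ v) ≤ v ⬝ᵥ A *ᵥ v :=
  exists_pos_mul_le_of_sq_homogeneous (continuous_dotProduct_mulVec_self A)
    (continuous_dotProduct_mulVec_self B) (smul_dotProduct_mulVec_smul A)
    (smul_dotProduct_mulVec_smul B) fun v hv => by simpa using hA.dotProduct_mulVec_pos hv

theorem exists_pos_mul_norm_sq_le (hA : A.PosDef) :
    ∃ ε > 0, ∀ v, ε * ‖v‖ ^ 2 ≤ v ⬝ᵥ A *ᵥ v :=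
  exists_pos_mul_le_of_sq_homogeneous (continuous_dotProduct_mulVec_self A)
    (continuous_norm.pow 2) (smul_dotProduct_mulVec_smul A)
    (fun c v => by rw [norm_smul, mul_pow, Real.norm_eq_abs, sq_abs])
    fun v hv => by simpa using hA.dotProduct_mulVec_pos hv

end Matrix.PosDef

end Quadratic

section Lyapunov

variable {n : Type*} [Fintype n] [DecidableEq n] {P W Q : Matrix n n ℝ}

theorem dotProduct_mulVec_pow_le_of_lyapunov (hW : W.PosDef) (hQ : Q.PosDef)
    (hPWP : Pᵀ * W * P = W - Q) :
    ∃ ρ < 1, 0 ≤ ρ ∧ ∀ k v, (P ^ k *ᵥ v) ⬝ᵥ W *ᵥ (P ^ k *ᵥ v) ≤ ρ ^ k * (v ⬝ᵥ W *ᵥ v) := by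
  obtain ⟨δ, hδ, hQW⟩ := hQ.exists_pos_mul_dotProduct_mulVec_le W
  obtain ⟨ε, hε, hWε⟩ := hW.exists_pos_mul_norm_sq_le
  have hW_nonneg (v : n → ℝ) : 0 ≤ v ⬝ᵥ W *ᵥ v := le_trans (by positivity) (hWε v)
  have hstep (v : n → ℝ) :
      (P *ᵥ v) ⬝ᵥ W *ᵥ (P *ᵥ v) ≤ max (1 - δ) 0 * (v ⬝ᵥ W *ᵥ v) := by
    rw [mulVec_dotProduct_mulVec_mulVec, hPWP, sub_mulVec, dotProduct_sub]
    nlinarith [hQW v, hW_nonneg v, le_max_left (1 - δ) 0]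
  refine ⟨max (1 - δ) 0, max_lt (by linarith) one_pos, le_max_right _ _, fun k => ?_⟩
  induction k with
  | zero => simp only [pow_zero, one_mulVec, one_mul, le_refl, implies_true]
  | succ k ih =>
    intro v
    rw [pow_succ', ← mulVec_mulVec, pow_succ', mul_assoc]
    exact (hstep _).trans (mul_le_mul_of_nonneg_left (ih v) (le_max_right _ _))

theorem tendsto_pow_mulVec_of_lyapunov (hW : W.PosDef) (hQ : Q.PosDef)
    (hPWP : Pᵀ * W * P = W - Q) (v : n → ℝ) :
    Tendsto (fun k => P ^ k *ᵥ v) atTop (𝓝 0) := by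
  obtain ⟨ρ, hρ1, hρ0, hdecay⟩ := dotProduct_mulVec_pow_le_of_lyapunov hW hQ hPWP
  obtain ⟨ε, hε, hWε⟩ := hW.exists_pos_mul_norm_sq_le
  have hsq : Tendsto (fun k => ‖P ^ k *ᵥ v‖ ^ 2) atTop (𝓝 0) := by
    have hbound := (tendsto_pow_atTop_nhds_zero_of_lt_one hρ0 hρ1).mul_const ((v ⬝ᵥ W *ᵥ v) / ε)
    rw [zero_mul] at hbound
    refine squeeze_zero (fun k => by positivity) (fun k => ?_) hbound
    rw [← mul_div_assoc, le_div_iff₀ hε, mul_comm]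
    exact (hWε _).trans (hdecay k v)
  rw [tendsto_zero_iff_norm_tendsto_zero]
  simpa [Real.sqrt_sq (norm_nonneg _)] using hsq.sqrt

end Lyapunov

section AffineIteration

variable {n : Type*} [Fintype n] [DecidableEq n] {P : Matrix n n ℝ}

theorem iterate_mulVec_add_sub {γ L : n → ℝ} (hL : P *ᵥ L + γ = L) (k : ℕ) (u : n → ℝ) :
    (fun v => P *ᵥ v + γ)^[k] u - L = P ^ k *ᵥ (u - L) := by
  induction k with
  | zero => simp
  | succ k ih =>
    rw [Function.iterate_succ_apply', pow_succ', ← mulVec_mulVec, ← ih]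
    nth_rewrite 1 [← hL]
    rw [mulVec_sub]
    abel

variable (hP : ∀ v, Tendsto (fun k => P ^ k *ᵥ v) atTop (𝓝 0))
include hP

theorem eq_zero_of_mulVec_eq_self_of_tendsto_pow {d : n → ℝ} (hd : P *ᵥ d = d) : d = 0 := by
  have hpow (k : ℕ) : P ^ k *ᵥ d = d := by
    induction k with
    | zero => simp
    | succ k ih => rw [pow_succ, ← mulVec_mulVec, hd, ih]
  simpa [hpow] using hP d

theorem exists_mulVec_add_eq_self_of_tendsto_pow (γ : n → ℝ) : ∃ L, P *ᵥ L + γ = L := by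
  have hinj : Function.Injective (1 - P).mulVec := fun x y hxy => by
    rw [← sub_eq_zero]
    refine eq_zero_of_mulVec_eq_self_of_tendsto_pow hP ?_
    have hker : (1 - P) *ᵥ (x - y) = 0 := by rw [mulVec_sub, hxy, sub_self]
    rw [sub_mulVec, one_mulVec, sub_eq_zero] at hker
    exact hker.symm
  obtain ⟨L, hL⟩ := mulVec_surjective_iff_isUnit.mpr (mulVec_injective_iff_isUnit.mp hinj) γ
  refine ⟨L, ?_⟩
  rw [← hL, sub_mulVec, one_mulVec]
  abel

theorem exists_unique_mulVec_add_eq_self_tendsto_iterate (γ : n → ℝ) :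
    ∃ L, P *ᵥ L + γ = L ∧ (∀ L', P *ᵥ L' + γ = L' → L' = L) ∧
      ∀ u, Tendsto (fun k => (fun v => P *ᵥ v + γ)^[k] u) atTop (𝓝 L) := by
  obtain ⟨L, hL⟩ := exists_mulVec_add_eq_self_of_tendsto_pow hP γ
  refine ⟨L, hL, fun L' hL' => ?_, fun u => ?_⟩
  · refine sub_eq_zero.mp (eq_zero_of_mulVec_eq_self_of_tendsto_pow hP ?_)
    rw [mulVec_sub]
    nth_rewrite 2 [← hL, ← hL']
    abel
  · rw [tendsto_sub_nhds_zero_iff.symm]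
    simpa only [iterate_mulVec_add_sub hL] using hP (u - L)

end AffineIteration

section VirtualTransmission

variable {m n : Type*} [Fintype m] [Fintype n] [DecidableEq m] [DecidableEq n]

theorem Matrix.PosDef.fromBlocks_zero_s14 {A : Matrix m m ℝ} {D : Matrix n n ℝ} (hA : A.PosDef)
    (hD : D.PosDef) : (fromBlocks A 0 0 D).PosDef := by
  let _ := hA.isUnit.invertible
  refine ((PosDef.fromBlocks₁₁ 0 D hA).mpr ?_).posDef_iff_isUnit.mpr ?_
  · simpa using hD.posSemidef
  · rw [isUnit_iff_isUnit_det, det_fromBlocks_zero₁₂]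
    exact (hA.isUnit.map detMonoidHom).mul (hD.isUnit.map detMonoidHom)

theorem conjTranspose_mul_mul_fromBlocks_swap {R : Type*} [Ring R] [StarRing R]
    (A : Matrix n n R) :
    (fromBlocks 0 1 1 0 : Matrix (n ⊕ n) (n ⊕ n) R)ᴴ * fromBlocks A 0 0 A * fromBlocks 0 1 1 0 =
      fromBlocks A 0 0 A := by
  simp [fromBlocks_conjTranspose, fromBlocks_multiply]

theorem inv_fromBlocks_zero_zero {K : Type*} [Field K] (A : Matrix n n K) :
    (fromBlocks A 0 0 A)⁻¹ = fromBlocks A⁻¹ 0 0 A⁻¹ := by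
  simpa using inv_fromBlocks_zero₁₂_of_isUnit_iff A 0 A Iff.rfl

theorem mulVec_injective_one_add_mul {M S : Matrix n n ℝ} (hM : M.PosSemidef) (hS : S.PosDef) :
    Function.Injective (1 + M * S).mulVec := by
  refine (injective_iff_map_eq_zero (mulVecLin (1 + M * S))).mpr fun v hv => ?_
  rw [mulVecLin_apply, add_mulVec, one_mulVec, ← mulVec_mulVec] at hv
  by_contra hv0
  have hSv : 0 < v ⬝ᵥ S *ᵥ v := by simpa using hS.dotProduct_mulVec_pos hv0
  have hMSv : 0 ≤ S *ᵥ v ⬝ᵥ M *ᵥ (S *ᵥ v) := by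
    simpa using hM.dotProduct_mulVec_nonneg (S *ᵥ v)
  have : S *ᵥ v ⬝ᵥ (v + M *ᵥ (S *ᵥ v)) = 0 := by rw [hv, dotProduct_zero]
  rw [dotProduct_add, dotProduct_comm] at this
  linarith

theorem conjTranspose_mul_mul_same_inv_mul_mul {K : Type*} [Field K] [StarRing K]
    {B J C N : Matrix n n K} (hB : IsUnit B) (hJ : Jᴴ * N * J = N) :
    (B⁻¹ * J * C)ᴴ * (Bᴴ * N * B) * (B⁻¹ * J * C) = Cᴴ * N * C := by
  have hBh : IsUnit Bᴴ := hB.star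
  simp only [conjTranspose_mul, conjTranspose_nonsing_inv, Matrix.mul_assoc,
    nonsing_inv_mul_cancel_left _ _ ((isUnit_iff_isUnit_det _).mp hBh),
    mul_nonsing_inv_cancel_left _ _ ((isUnit_iff_isUnit_det _).mp hB)]
  conv_rhs => rw [← hJ]
  simp only [Matrix.mul_assoc]

theorem conjTranspose_mul_inv_mul_one_add_mul {K : Type*} [Field K] [StarRing K]
    {M S : Matrix n n K} (hM : IsUnit M) (hMh : M.IsHermitian) (hSh : S.IsHermitian) :
    (1 + M * S)ᴴ * M⁻¹ * (1 + M * S) = (1 - M * S)ᴴ * M⁻¹ * (1 - M * S) + (4 : K) • S := by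
  simp only [conjTranspose_add, conjTranspose_sub, conjTranspose_one, conjTranspose_mul, hMh.eq,
    hSh.eq, add_mul, sub_mul, mul_add, mul_sub, one_mul, mul_one, Matrix.mul_assoc,
    mul_nonsing_inv _ ((isUnit_iff_isUnit_det _).mp hM),
    nonsing_inv_mul_cancel_left _ _ ((isUnit_iff_isUnit_det _).mp hM)]
  module

end VirtualTransmission

theorem vtm_iteration_converges (r : ℕ)
    (Z : Matrix (Fin r) (Fin r) ℝ) (hZ : Z.PosDef)
    (S : Matrix (Fin r ⊕ Fin r) (Fin r ⊕ Fin r) ℝ) (hS : S.PosDef)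
    (M J P : Matrix (Fin r ⊕ Fin r) (Fin r ⊕ Fin r) ℝ)
    (hM : M = fromBlocks Z 0 0 Z)
    (hJ : J = fromBlocks 0 1 1 0)
    (hP : P = (1 + M * S)⁻¹ * J * (1 - M * S))
    (γ : Fin r ⊕ Fin r → ℝ) :
    ∃ L : Fin r ⊕ Fin r → ℝ,
      P *ᵥ L + γ = L ∧
      (∀ L' : Fin r ⊕ Fin r → ℝ, P *ᵥ L' + γ = L' → L' = L) ∧
      ∀ u0 : Fin r ⊕ Fin r → ℝ,
        Filter.Tendsto (fun k : ℕ => (fun v => P *ᵥ v + γ)^[k] u0)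
          Filter.atTop (nhds L) := by
  have hMpd : M.PosDef := hM ▸ hZ.fromBlocks_zero_s14 hZ
  have hB := mulVec_injective_one_add_mul hMpd.posSemidef hS
  have hW := hMpd.inv.conjTranspose_mul_mul_same hB
  have hJM : Jᴴ * M⁻¹ * J = M⁻¹ := by
    rw [hJ, hM, inv_fromBlocks_zero_zero, conjTranspose_mul_mul_fromBlocks_swap]
  have hlyap : Pᵀ * ((1 + M * S)ᴴ * M⁻¹ * (1 + M * S)) * P =
      (1 + M * S)ᴴ * M⁻¹ * (1 + M * S) - (4 : ℝ) • S := by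
    rw [← conjTranspose_eq_transpose_of_trivial, hP,
      conjTranspose_mul_mul_same_inv_mul_mul (mulVec_injective_iff_isUnit.mp hB) hJM,
      conjTranspose_mul_inv_mul_one_add_mul hMpd.isUnit hMpd.1 hS.1, add_sub_cancel_right]
  exact exists_unique_mulVec_add_eq_self_tendsto_iterate
    (tendsto_pow_mulVec_of_lyapunov hW (hS.smul four_pos) hlyap) γ
end
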